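/- Let u, v : ℝ^N → ℂ (with v = u·η for a real-valued η), A : ℝ^N → ℝ^N, L > 0, β ≥ 1, and set u_L = min(|u|, L). Then for all x, y: Re[(u(x) − u(y)e^{iθ})·conj(u(x)u_L(x)^{2(β−1)} − u(y)u_L(y)^{2(β−1)} e^{iθ})] ≥ (|u(x)| − |u(y)|)(|u(x)| u_L(x)^{2(β−1)} − |u(y)| u_L(y)^{2(β−1)}), where θ = A((x+y)/2)·(x−y). -/

import Mathlib

/-!
Write `E = exp(iθ)` and `w = u(y) E`, so that `|w| = |u(y)|`. With `p`, `q` the two nonnegative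
weights `u_L^{2(β-1)}`, the real part expands to `p|u(x)|² + q|w|² - (p + q) Re(u(x) conj w)`,
and bounding `Re(u(x) conj w)` by `|u(x)| |w|` (Cauchy–Schwarz) leaves exactly the factored
right-hand side `(|u(x)| - |w|)(p|u(x)| - q|w|)`.
-/

open scoped ComplexConjugate RealInnerProductSpace

theorem sub_norm_mul_sub_norm_le_real_inner {F : Type*} [SeminormedAddCommGroup F]
    [InnerProductSpace ℝ F] (a w : F) {p q : ℝ} (hp : 0 ≤ p) (hq : 0 ≤ q) :
    (‖a‖ - ‖w‖) * (‖a‖ * p - ‖w‖ * q) ≤ ⟪p • a - q • w, a - w⟫ := by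
  have hexpand : ⟪p • a - q • w, a - w⟫ = p * ‖a‖ ^ 2 + q * ‖w‖ ^ 2 - (p + q) * ⟪a, w⟫ := by
    simp only [inner_sub_left, inner_sub_right, real_inner_smul_left, real_inner_self_eq_norm_sq,
      real_inner_comm a w]
    ring
  rw [hexpand]
  nlinarith [mul_le_mul_of_nonneg_left (real_inner_le_norm a w) (add_nonneg hp hq)]

theorem Complex.sub_norm_mul_sub_norm_le_re_mul_conj (a w : ℂ) {p q : ℝ} (hp : 0 ≤ p)
    (hq : 0 ≤ q) :
    (‖a‖ - ‖w‖) * (‖a‖ * p - ‖w‖ * q) ≤ ((a - w) * conj (a * p - w * q)).re := by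
  have h := sub_norm_mul_sub_norm_le_real_inner a w hp hq
  rwa [Complex.inner, Complex.real_smul, Complex.real_smul, mul_comm (p : ℂ),
    mul_comm (q : ℂ)] at h

theorem moser_test_function_real_part_lower_bound_general (N : ℕ)
    (u : EuclideanSpace ℝ (Fin N) → ℂ)
    (L β : ℝ) (hL : 0 < L)
    (uL : EuclideanSpace ℝ (Fin N) → ℝ)
    (huL : ∀ z, uL z = min (‖u z‖) L)
    (x y : EuclideanSpace ℝ (Fin N))
    (θ : ℝ) :
    (‖u x‖ - ‖u y‖) *
        (‖u x‖ * uL x ^ (2 * (β - 1)) - ‖u y‖ * uL y ^ (2 * (β - 1))) ≤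
      ((u x - u y * Complex.exp ((θ : ℂ) * Complex.I)) *
          (starRingEnd ℂ) (u x * ((uL x ^ (2 * (β - 1)) : ℝ) : ℂ) -
            u y * ((uL y ^ (2 * (β - 1)) : ℝ) : ℂ) * Complex.exp ((θ : ℂ) * Complex.I))).re := by
  have huL_nonneg (z) : 0 ≤ uL z := huL z ▸ le_min (norm_nonneg _) hL.le
  have h := Complex.sub_norm_mul_sub_norm_le_re_mul_conj (u x)
    (u y * Complex.exp ((θ : ℂ) * Complex.I))
    (Real.rpow_nonneg (huL_nonneg x) (2 * (β - 1))) (Real.rpow_nonneg (huL_nonneg y) (2 * (β - 1)))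
  rwa [norm_mul, Complex.norm_exp_ofReal_mul_I, mul_one, mul_right_comm (u y)] at h

theorem moser_test_function_real_part_lower_bound (N : ℕ)
    (u : EuclideanSpace ℝ (Fin N) → ℂ)
    (A : EuclideanSpace ℝ (Fin N) → EuclideanSpace ℝ (Fin N))
    (L β : ℝ) (hL : 0 < L) (hβ : 1 ≤ β)
    (uL : EuclideanSpace ℝ (Fin N) → ℝ)
    (huL : ∀ z, uL z = min (‖u z‖) L)
    (x y : EuclideanSpace ℝ (Fin N))
    (θ : ℝ) (hθ : θ = (inner ℝ (A ((2 : ℝ)⁻¹ • (x + y))) (x - y) : ℝ)) :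
    (‖u x‖ - ‖u y‖) *
        (‖u x‖ * uL x ^ (2 * (β - 1)) - ‖u y‖ * uL y ^ (2 * (β - 1))) ≤
      ((u x - u y * Complex.exp ((θ : ℂ) * Complex.I)) *
          (starRingEnd ℂ) (u x * ((uL x ^ (2 * (β - 1)) : ℝ) : ℂ) -
            u y * ((uL y ^ (2 * (β - 1)) : ℝ) : ℂ) * Complex.exp ((θ : ℂ) * Complex.I))).re :=
  moser_test_function_real_part_lower_bound_general N u L β hL uL huL x y θ
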